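/- The open positive orthant (0,∞)ⁿ is forward invariant for the system: if x : [0,T] → ℝⁿ is a solution with x(0) ∈ (0,∞)ⁿ, then x(t) ∈ (0,∞)ⁿ for all t ∈ [0,T]. -/
import Mathlib

lemma aux_rpow_le {r M c : ℝ} (hr : 0 ≤ r) (hrM : r ≤ M) (hM : 1 ≤ M) (hc : 1 ≤ c) :
    r ^ c ≤ r * M ^ c := by
  rcases eq_or_lt_of_le hr with h | h
  · rw [← h, Real.zero_rpow (by linarith), zero_mul]
  · have h1 := Real.rpow_add h 1 (c - 1)
    rw [show (1:ℝ) + (c - 1) = c by ring, Real.rpow_one] at h1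
    rw [h1]
    apply mul_le_mul_of_nonneg_left _ hr
    calc r ^ (c - 1) ≤ M ^ (c - 1) := Real.rpow_le_rpow hr hrM (by linarith)
      _ ≤ M ^ c := Real.rpow_le_rpow_of_exponent_le hM (by linarith)

theorem stmt_7
    (n m : ℕ) (hm : 0 < m) (hmn : m ≤ n)
    (θ : ℝ → ℝ)
    (hθlip : LocallyLipschitz θ)
    (hθ0 : θ 0 = 0)
    (hθnn : ∀ y : ℝ, 0 ≤ θ y)
    (hθmono : StrictMonoOn θ (Set.Ici (0:ℝ)))
    (hθonto : ∀ r : ℝ, 0 ≤ r → ∃ y : ℝ, 0 ≤ y ∧ θ y = r)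
    (hθint : MeasureTheory.IntegrableOn (fun y => |Real.log (θ y)|) (Set.Ioc (0:ℝ) 1))
    (A : Matrix (Fin m) (Fin m) ℝ)
    (hAnn : ∀ i j, 0 ≤ A i j)
    (hAirr : ∀ i j, 0 < ((1 + A) ^ (m - 1)) i j)
    (B : Matrix (Fin n) (Fin m) ℝ)
    (hBnn : ∀ k j, 0 ≤ B k j)
    (hBrank : B.rank = m)
    (hBrow : ∀ k, ∃ j, B k j ≠ 0)
    (hBent : ∀ k j, B k j = 0 ∨ 1 ≤ B k j)
    (f : EuclideanSpace ℝ (Fin n) → EuclideanSpace ℝ (Fin n))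
    (hf : ∀ x : EuclideanSpace ℝ (Fin n), ∀ k : Fin n,
      f x k = ∑ i : Fin m, ∑ j : Fin m,
        A i j * (∏ l : Fin n, θ (x l) ^ (B l j)) * (B k i - B k j))
    :
    ∀ T : ℝ, 0 ≤ T → ∀ x : ℝ → EuclideanSpace ℝ (Fin n),
      (∀ t ∈ Set.Icc (0:ℝ) T, HasDerivWithinAt x (f (x t)) (Set.Icc 0 T) t) →
      (∀ k, 0 < x 0 k) →
      ∀ t ∈ Set.Icc (0:ℝ) T, ∀ k, 0 < x t k := by
  intro T hT x hx hx0
  -- coordinate derivatives and continuity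
  have hd : ∀ (k : Fin n), ∀ t ∈ Set.Icc (0:ℝ) T,
      HasDerivWithinAt (fun s => x s k) (f (x t) k) (Set.Icc 0 T) t := by
    intro k t ht
    exact (EuclideanSpace.proj (𝕜 := ℝ) k).hasFDerivAt.comp_hasDerivWithinAt t (hx t ht)
  have hxc : ∀ (k : Fin n), ContinuousOn (fun s => x s k) (Set.Icc 0 T) :=
    fun k t ht => (hd k t ht).continuousWithinAt
  by_contra hcon
  push_neg at hcon
  obtain ⟨ts, hts, ks, hks⟩ := hcon
  set E : Set ℝ := {t ∈ Set.Icc 0 T | ∃ k, x t k ≤ 0} with hE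
  have hEne : E.Nonempty := ⟨ts, hts, ks, hks⟩
  have hEbdd : BddBelow E := ⟨0, fun t ht => ht.1.1⟩
  have hEclosed : IsClosed E := by
    have : E = ⋃ k : Fin n, (Set.Icc 0 T ∩ (fun s => x s k) ⁻¹' Set.Iic 0) := by
      ext t
      simp only [hE, Set.mem_setOf_eq, Set.mem_iUnion, Set.mem_inter_iff, Set.mem_preimage,
        Set.mem_Iic]
      tauto
    rw [this]
    exact isClosed_iUnion_of_finite fun k =>
      (hxc k).preimage_isClosed_of_isClosed isClosed_Icc isClosed_Iic
  set t₀ : ℝ := sInf E with ht₀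
  have ht₀E : t₀ ∈ E := hEclosed.csInf_mem hEne hEbdd
  obtain ⟨ht₀Icc, k, hk0⟩ := ht₀E
  have ht₀pos : 0 < t₀ := by
    rcases lt_or_eq_of_le ht₀Icc.1 with h | h
    · exact h
    · exact absurd hk0 (not_le.mpr (h ▸ hx0 k))
  -- positivity strictly before t₀
  have hpos : ∀ t, 0 ≤ t → t < t₀ → ∀ l, 0 < x t l := by
    intro t h0 hlt l
    by_contra hle
    push_neg at hle
    have : t ∈ E := ⟨⟨h0, hlt.le.trans ht₀Icc.2⟩, l, hle⟩
    exact absurd (csInf_le hEbdd this) (not_le.mpr hlt)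
  have hsub : Set.Icc (0:ℝ) t₀ ⊆ Set.Icc 0 T :=
    Set.Icc_subset_Icc le_rfl ht₀Icc.2
  -- nonnegativity on [0, t₀]
  have hnonneg : ∀ t ∈ Set.Icc (0:ℝ) t₀, ∀ l, 0 ≤ x t l := by
    intro t ht l
    rcases lt_or_eq_of_le ht.2 with h | h
    · exact (hpos t ht.1 h l).le
    · subst h
      have hcl : t₀ ∈ closure (Set.Ico 0 t₀) := by
        rw [closure_Ico ht₀pos.ne]
        exact ⟨ht₀pos.le, le_rfl⟩
      have hnb : Filter.NeBot (nhdsWithin t₀ (Set.Ico 0 t₀)) :=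
        mem_closure_iff_nhdsWithin_neBot.mp hcl
      have htend : Filter.Tendsto (fun s => x s l) (nhdsWithin t₀ (Set.Ico 0 t₀))
          (nhds (x t₀ l)) :=
        (((hxc l).mono hsub) t₀ ⟨ht₀pos.le, le_rfl⟩).mono_left
          (nhdsWithin_mono _ Set.Ico_subset_Icc_self)
      refine ge_of_tendsto htend ?_
      filter_upwards [self_mem_nhdsWithin] with s hs
      exact (hpos s hs.1 hs.2 l).le
  have hxt₀k : x t₀ k = 0 := le_antisymm hk0 (hnonneg t₀ ⟨ht₀pos.le, le_rfl⟩ k)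
  -- bound M on θ of coordinates over [0, t₀]
  have hφc : ContinuousOn (fun t => ∑ l : Fin n, θ (x t l)) (Set.Icc 0 t₀) := by
    apply continuousOn_finset_sum
    intro l _
    exact hθlip.continuous.comp_continuousOn ((hxc l).mono hsub)
  obtain ⟨M₀, hM₀⟩ := isCompact_Icc.exists_bound_of_continuousOn hφc
  set M : ℝ := max M₀ 1 with hM
  have hM1 : (1:ℝ) ≤ M := le_max_right _ _
  have hMpos : (0:ℝ) < M := lt_of_lt_of_le one_pos hM1
  have hθb : ∀ t ∈ Set.Icc (0:ℝ) t₀, ∀ l, θ (x t l) ≤ M := by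
    intro t ht l
    calc θ (x t l) ≤ ∑ l' : Fin n, θ (x t l') :=
          Finset.single_le_sum (fun i _ => hθnn _) (Finset.mem_univ l)
      _ ≤ |∑ l' : Fin n, θ (x t l')| := le_abs_self _
      _ ≤ M₀ := hM₀ t ht
      _ ≤ M := le_max_left _ _
  -- Lipschitz constant near 0
  obtain ⟨K, U, hUmem, hK⟩ := hθlip 0
  obtain ⟨δ, hδ, hball⟩ := Metric.mem_nhds_iff.mp hUmem
  have hθK : ∀ r : ℝ, 0 ≤ r → r < δ → θ r ≤ K * r := by
    intro r hr hrδ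
    have h1 : r ∈ U := hball (by simpa [Real.norm_eq_abs, abs_of_nonneg hr] using
      (show |r| < δ by rwa [abs_of_nonneg hr]))
    have h0 : (0:ℝ) ∈ U := hball (Metric.mem_ball_self hδ)
    have := hK.dist_le_mul r h1 0 h0
    simp only [Real.dist_eq, hθ0, sub_zero] at this
    rwa [abs_of_nonneg (hθnn r), abs_of_nonneg hr] at this
  -- the constant C
  set C : ℝ := (K : ℝ) * ∑ i : Fin m, ∑ j : Fin m,
      A i j * (M ^ (B k j) * ∏ l ∈ Finset.univ.erase k, M ^ (B l j)) * B k j with hC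
  have hC0 : 0 ≤ C := by
    apply mul_nonneg K.coe_nonneg
    apply Finset.sum_nonneg; intro i _
    apply Finset.sum_nonneg; intro j _
    apply mul_nonneg (mul_nonneg (hAnn i j) (mul_nonneg (Real.rpow_nonneg hMpos.le _)
      (Finset.prod_nonneg fun l _ => Real.rpow_nonneg hMpos.le _))) (hBnn k j)
  -- the key quasipositivity bound
  have hkey : ∀ t ∈ Set.Icc (0:ℝ) t₀, x t k < δ → -(C * x t k) ≤ f (x t) k := by
    intro t ht hδt
    rw [hf]
    have hxk0 : 0 ≤ x t k := hnonneg t ht k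
    have hsum : C * x t k = ∑ i : Fin m, ∑ j : Fin m,
        (K : ℝ) * (A i j * (M ^ (B k j) * ∏ l ∈ Finset.univ.erase k, M ^ (B l j)) * B k j)
          * x t k := by
      rw [hC, Finset.mul_sum, Finset.sum_mul]
      refine Finset.sum_congr rfl fun i _ => ?_
      rw [Finset.mul_sum, Finset.sum_mul]
    rw [hsum, ← Finset.sum_neg_distrib]
    apply Finset.sum_le_sum
    intro i _
    rw [← Finset.sum_neg_distrib]
    apply Finset.sum_le_sum
    intro j _
    have hprodnn : 0 ≤ ∏ l : Fin n, θ (x t l) ^ (B l j) :=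
      Finset.prod_nonneg fun l _ => Real.rpow_nonneg (hθnn _) _
    rcases hBent k j with h0 | h1
    · rw [h0]
      simp only [mul_zero, zero_mul, neg_zero, sub_zero]
      exact mul_nonneg (mul_nonneg (hAnn i j) hprodnn) (hBnn k i)
    · -- B k j ≥ 1
      have hsplit : (∏ l : Fin n, θ (x t l) ^ (B l j))
          = θ (x t k) ^ (B k j) * ∏ l ∈ Finset.univ.erase k, θ (x t l) ^ (B l j) :=
        (Finset.mul_prod_erase Finset.univ _ (Finset.mem_univ k)).symm
      have hbound : (∏ l : Fin n, θ (x t l) ^ (B l j))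
          ≤ (K : ℝ) * x t k * (M ^ (B k j) * ∏ l ∈ Finset.univ.erase k, M ^ (B l j)) := by
        rw [hsplit]
        have h2 : θ (x t k) ^ (B k j) ≤ θ (x t k) * M ^ (B k j) :=
          aux_rpow_le (hθnn _) (hθb t ht k) hM1 h1
        have h3 : θ (x t k) * M ^ (B k j) ≤ ((K : ℝ) * x t k) * M ^ (B k j) :=
          mul_le_mul_of_nonneg_right (hθK _ hxk0 hδt) (Real.rpow_nonneg hMpos.le _)
        have h4 : ∏ l ∈ Finset.univ.erase k, θ (x t l) ^ (B l j)
            ≤ ∏ l ∈ Finset.univ.erase k, M ^ (B l j) := by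
          apply Finset.prod_le_prod (fun l _ => Real.rpow_nonneg (hθnn _) _)
          intro l _
          exact Real.rpow_le_rpow (hθnn _) (hθb t ht l) (hBnn l j)
        calc θ (x t k) ^ (B k j) * ∏ l ∈ Finset.univ.erase k, θ (x t l) ^ (B l j)
            ≤ (((K : ℝ) * x t k) * M ^ (B k j)) * ∏ l ∈ Finset.univ.erase k, M ^ (B l j) := by
              apply mul_le_mul (h2.trans h3) h4
                (Finset.prod_nonneg fun l _ => Real.rpow_nonneg (hθnn _) _)
              exact mul_nonneg (mul_nonneg K.coe_nonneg hxk0) (Real.rpow_nonneg hMpos.le _)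
          _ = (K : ℝ) * x t k * (M ^ (B k j) * ∏ l ∈ Finset.univ.erase k, M ^ (B l j)) := by
              ring
      have hBki : 0 ≤ B k i := hBnn k i
      have hBkj : 0 ≤ B k j := (hBnn k j)
      nlinarith [mul_nonneg (hAnn i j) hprodnn, hAnn i j,
        mul_le_mul_of_nonneg_right hbound (mul_nonneg (hAnn i j) hBkj),
        mul_le_mul_of_nonneg_left hbound (hAnn i j)]
  -- find t₁ close to t₀ with x t k < δ on [t₁, t₀]
  have hcw : ContinuousWithinAt (fun s => x s k) (Set.Icc 0 t₀) t₀ :=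
    ((hxc k).mono hsub) t₀ ⟨ht₀pos.le, le_rfl⟩
  have hmem : {s : ℝ | x s k < δ} ∈ nhdsWithin t₀ (Set.Icc 0 t₀) := by
    have : Set.Iio δ ∈ nhds (x t₀ k) := Iio_mem_nhds (by rw [hxt₀k]; exact hδ)
    exact hcw this
  obtain ⟨u, huo, hut₀, husub⟩ := mem_nhdsWithin.mp hmem
  obtain ⟨ε, hε, hballu⟩ := Metric.isOpen_iff.mp huo t₀ hut₀
  set t₁ : ℝ := max (t₀ - ε / 2) (t₀ / 2) with ht₁
  have ht₁0 : 0 ≤ t₁ := le_trans (by linarith) (le_max_right _ _)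
  have ht₁lt : t₁ < t₀ := max_lt (by linarith) (by linarith)
  have ht₁mem : ∀ s ∈ Set.Icc t₁ t₀, s ∈ Set.Icc 0 t₀ ∧ x s k < δ := by
    intro s hs
    have hs0 : s ∈ Set.Icc 0 t₀ := ⟨ht₁0.trans hs.1, hs.2⟩
    refine ⟨hs0, husub ⟨hballu ?_, hs0⟩⟩
    rw [Metric.mem_ball, Real.dist_eq, abs_of_nonpos (by linarith [hs.2])]
    have : t₀ - ε / 2 ≤ t₁ := le_max_left _ _
    linarith [hs.1]
  -- monotone auxiliary function
  set g : ℝ → ℝ := fun s => x s k * Real.exp (C * s) with hg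
  have hIsub : Set.Icc t₁ t₀ ⊆ Set.Icc 0 T := fun s hs =>
    hsub (ht₁mem s hs).1
  have hgmono : MonotoneOn g (Set.Icc t₁ t₀) := by
    apply monotoneOn_of_hasDerivWithinAt_nonneg (convex_Icc t₁ t₀)
      (f' := fun s => f (x s) k * Real.exp (C * s) + x s k * (Real.exp (C * s) * C))
    · exact ContinuousOn.mul ((hxc k).mono hIsub)
        (Real.continuous_exp.comp (continuous_const.mul continuous_id)).continuousOn
    · intro s hs
      rw [interior_Icc] at hs
      have hsI : s ∈ Set.Icc 0 T := hIsub (Set.Ioo_subset_Icc_self hs)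
      have h1 : HasDerivWithinAt (fun s => x s k) (f (x s) k) (interior (Set.Icc t₁ t₀)) s := by
        rw [interior_Icc]
        exact (hd k s hsI).mono (fun u hu => hIsub (Set.Ioo_subset_Icc_self hu))
      have h2 : HasDerivAt (fun s => Real.exp (C * s)) (Real.exp (C * s) * C) s := by
        simpa using ((hasDerivAt_id s).const_mul C).exp
      rw [interior_Icc] at *
      exact h1.mul h2.hasDerivWithinAt
    · intro s hs
      rw [interior_Icc] at hs
      have hsmem := ht₁mem s (Set.Ioo_subset_Icc_self hs)
      have hk1 := hkey s hsmem.1 hsmem.2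
      have hexp := Real.exp_pos (C * s)
      nlinarith
  have hfinal : g t₁ ≤ g t₀ :=
    hgmono ⟨le_rfl, ht₁lt.le⟩ ⟨ht₁lt.le, le_rfl⟩ ht₁lt.le
  have hgt₀ : g t₀ = 0 := by rw [hg]; simp [hxt₀k]
  have hgt₁ : 0 < g t₁ :=
    mul_pos (hpos t₁ ht₁0 ht₁lt k) (Real.exp_pos _)
  rw [hgt₀] at hfinal
  exact absurd hfinal (not_le.mpr hgt₁)
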